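/- arXiv:2502.20708 — 4 statements merged into one kernel-verified Lean document; each statement's English description precedes it below -/
import Mathlib

section
/- Let Z₁,…,Z_n be independent random vectors and let 𝒜 be a set of pairs (i,j) of distinct indices such that every index appears in at most one pair of 𝒜. Suppose that for each pair (i,j) ∈ 𝒜, conditional on all Z_l with l ≠ j, the event A_{i,j} has conditional probability at most p ∈ [0,1], and that A_{i,j} is measurable with respect to (Z_l)_{l ≠ j'} for every other pair (i',j') ∈ 𝒜. Then P(⋂_{(i,j)∈𝒜} A_{i,j}) ≤ p^{|𝒜|}. -/
open MeasureTheory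

/-- product bound for events indexed by disjoint pairs. If the
`Z l` are independent, each event `A (i,j)` has conditional probability at most
`p` given the σ-algebra generated by `(Z l)_{l ≠ j}`, and every other event
`A (i',j')` is measurable with respect to that σ-algebra, then the probability
of the intersection is at most `p^|𝒜|`. -/
theorem disjoint_pairs_product_bound {n d : ℕ} {Ω : Type*} [m0 : MeasurableSpace Ω]
    (μ : Measure Ω) [IsProbabilityMeasure μ]
    (Z : Fin n → Ω → (Fin d → ℝ)) (hZmeas : ∀ l, Measurable (Z l))
    (hindep : ProbabilityTheory.iIndepFun Z μ)
    (𝒜 : Finset (Fin n × Fin n))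
    (hdistinct : ∀ q ∈ 𝒜, q.1 ≠ q.2)
    (hdisj : ∀ q ∈ 𝒜, ∀ q' ∈ 𝒜, q ≠ q' →
      q.1 ≠ q'.1 ∧ q.1 ≠ q'.2 ∧ q.2 ≠ q'.1 ∧ q.2 ≠ q'.2)
    (A : Fin n × Fin n → Set Ω) (hAmeas : ∀ q ∈ 𝒜, MeasurableSet (A q))
    (p : ℝ) (hp0 : 0 ≤ p) (hp1 : p ≤ 1)
    -- the σ-algebra generated by `(Z l)_{l ≠ j}`:
    (F : Fin n → MeasurableSpace Ω)
    (hF : ∀ j, F j = ⨆ l ∈ {l : Fin n | l ≠ j}, MeasurableSpace.comap (Z l) inferInstance)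
    (hcond : ∀ q ∈ 𝒜, ∀ᵐ ω ∂μ, (μ[Set.indicator (A q) (fun _ => (1 : ℝ)) | F q.2]) ω ≤ p)
    (hmeasF : ∀ q ∈ 𝒜, ∀ q' ∈ 𝒜, q' ≠ q → MeasurableSet[F q.2] (A q')) :
    (μ (⋂ q ∈ 𝒜, A q)).toReal ≤ p ^ 𝒜.card := by
  classical
  have hFle : ∀ j, F j ≤ m0 := by
    intro j
    rw [hF j]
    refine iSup₂_le fun l _ => (hZmeas l).comap_le
  clear hF hindep hdistinct hdisj
  induction 𝒜 using Finset.strongInduction with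
  | _ s IH =>
    rcases s.eq_empty_or_nonempty with rfl | ⟨q, hq⟩
    · simp
    · set B : Set Ω := ⋂ q' ∈ s.erase q, A q' with hB
      have hBmeasF : MeasurableSet[F q.2] B := by
        refine MeasurableSet.biInter (Set.to_countable _) fun q' hq' => ?_
        exact hmeasF q hq q' (Finset.mem_of_mem_erase hq')
          (Finset.ne_of_mem_erase hq')
      have hBmeas : MeasurableSet B := hFle q.2 _ hBmeasF
      have hsplit : (⋂ q' ∈ s, A q') = A q ∩ B := by
        conv_lhs => rw [← Finset.insert_erase hq]
        simp [hB, Set.biInter_insert]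
      have hind : Integrable (Set.indicator (A q) (fun _ => (1 : ℝ))) μ :=
        (integrable_const (1 : ℝ)).indicator (hAmeas q hq)
      have h1 : (μ (⋂ q' ∈ s, A q')).toReal
          = ∫ ω in B, Set.indicator (A q) (fun _ => (1 : ℝ)) ω ∂μ := by
        rw [setIntegral_indicator (hAmeas q hq), setIntegral_const, smul_eq_mul,
          mul_one, hsplit, Set.inter_comm]; rfl
      have h2 : ∫ ω in B, Set.indicator (A q) (fun _ => (1 : ℝ)) ω ∂μ
          = ∫ ω in B, (μ[Set.indicator (A q) (fun _ => (1 : ℝ)) | F q.2]) ω ∂μ :=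
        (setIntegral_condExp (hFle q.2) hind hBmeasF).symm
      have h3 : ∫ ω in B, (μ[Set.indicator (A q) (fun _ => (1 : ℝ)) | F q.2]) ω ∂μ
          ≤ ∫ _ω in B, p ∂μ := by
        refine setIntegral_mono_ae integrable_condExp.integrableOn
          (integrableOn_const) ?_
        exact hcond q hq
      have h4 : ∫ _ω in B, p ∂μ = p * (μ B).toReal := by
        rw [setIntegral_const, smul_eq_mul, mul_comm]; rfl
      have h5 : (μ B).toReal ≤ p ^ (s.erase q).card := by
        refine IH (s.erase q) (Finset.erase_ssubset hq)
          (fun q' hq' => hAmeas q' (Finset.mem_of_mem_erase hq'))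
          (fun q' hq' => hcond q' (Finset.mem_of_mem_erase hq'))
          (fun q' hq' q'' hq'' h => hmeasF q' (Finset.mem_of_mem_erase hq')
            q'' (Finset.mem_of_mem_erase hq'') h)
      calc (μ (⋂ q' ∈ s, A q')).toReal ≤ p * (μ B).toReal := by
            rw [h1, h2]; exact h3.trans (le_of_eq h4)
        _ ≤ p * p ^ (s.erase q).card := mul_le_mul_of_nonneg_left h5 hp0
        _ = p ^ s.card := by
            rw [← pow_succ', Finset.card_erase_of_mem hq,
              Nat.sub_add_cancel (Finset.card_pos.2 ⟨q, hq⟩)]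
end

section
/- Let z₁,…,z_n ∈ ℝ^d, H ⊆ [n], and write S_T = (1/n)·Σ_{i∈T} zᵢ zᵢᵀ. Suppose S_T ⪯ α·S_H for every T ⊆ H with |T| ≤ m (operator norm resilience), with 0 ≤ α < 1. Then for every F ⊆ H with |F| ≤ m and every T ⊆ H with |T| ≤ m, one has S_{T∖F} ⪯ (α/(1−α))·S_{H∖F}. -/
open Matrix

/-- Normalized partial sample covariance `S_T = (1/n)·Σ_{i∈T} zᵢ zᵢᵀ`. -/
noncomputable def sampleCov {d n : ℕ} (z : Fin n → (Fin d → ℝ)) (T : Finset (Fin n)) :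
    Matrix (Fin d) (Fin d) ℝ :=
  (1 / (n : ℝ)) • ∑ i ∈ T, Matrix.of (fun a b => z i a * z i b)

lemma sampleCov_sdiff_add {d n : ℕ} (z : Fin n → (Fin d → ℝ)) {F H : Finset (Fin n)}
    (hF : F ⊆ H) : sampleCov z (H \ F) + sampleCov z F = sampleCov z H := by
  simp only [sampleCov, ← smul_add, Finset.sum_sdiff hF]

lemma posSemidef_smul_nonneg {d : ℕ} {M : Matrix (Fin d) (Fin d) ℝ}
    (hM : M.PosSemidef) {c : ℝ} (hc : 0 ≤ c) : (c • M).PosSemidef := by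
  refine ⟨?_, fun x => ?_⟩
  · unfold Matrix.IsHermitian
    rw [Matrix.conjTranspose_smul, hM.1.eq]
    simp
  · exact (hM.smul hc).2 x

/-- operator norm resilience survives deleting a small set `F`:
if `S_T ⪯ α·S_H` for all `T ⊆ H` with `|T| ≤ m`, then
`S_{T∖F} ⪯ (α/(1−α))·S_{H∖F}` for all such `T` and all `F ⊆ H`, `|F| ≤ m`. -/
theorem opnorm_resilience_after_deletion {d n m : ℕ} (z : Fin n → (Fin d → ℝ))
    (H : Finset (Fin n)) (α : ℝ) (hα0 : 0 ≤ α) (hα1 : α < 1)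
    (h : ∀ T ⊆ H, T.card ≤ m → (α • sampleCov z H - sampleCov z T).PosSemidef) :
    ∀ F ⊆ H, F.card ≤ m → ∀ T ⊆ H, T.card ≤ m →
      ((α / (1 - α)) • sampleCov z (H \ F) - sampleCov z (T \ F)).PosSemidef := by
  intro F hF hFm T hT hTm
  have h1 : (α • sampleCov z H - sampleCov z F).PosSemidef := h F hF hFm
  have h2 : (α • sampleCov z H - sampleCov z (T \ F)).PosSemidef :=
    h (T \ F) ((Finset.sdiff_subset).trans hT)
      (le_trans (Finset.card_le_card Finset.sdiff_subset) hTm)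
  have hc : (0:ℝ) ≤ α / (1 - α) := div_nonneg hα0 (by linarith)
  have key : (α / (1 - α)) • sampleCov z (H \ F) - sampleCov z (T \ F)
      = (α / (1 - α)) • (α • sampleCov z H - sampleCov z F)
        + (α • sampleCov z H - sampleCov z (T \ F)) := by
    have hS := sampleCov_sdiff_add z hF
    have hne : (1 - α) ≠ 0 := by linarith
    rw [← hS]
    ext a b
    simp only [Matrix.add_apply, Matrix.sub_apply, Matrix.smul_apply, smul_eq_mul]
    field_simp
    ring
  rw [key]
  exact (posSemidef_smul_nonneg h1 hc).add h2
end

section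
/- Let z₁,…,z_n ∈ ℝ^d, H ⊆ [n], S_T = (1/n)·Σ_{i∈T} zᵢ zᵢᵀ, and suppose S_T ⪯ α·S_H for all T ⊆ H with |T| ≤ m, where 0 ≤ α < 1. If F ⊆ H with |F| ≤ m and if the matrices are restricted to Col(S_H), then for every z ∈ ℝ^d, zᵀ S_{H∖F}† z ≤ (1−α)^{-1} · zᵀ S_H† z, where † denotes the Moore–Penrose pseudoinverse, provided Col(S_{H∖F}) = Col(S_H). -/
open Matrix

/-- Penrose conditions: `Bp` is the Moore–Penrose pseudoinverse of `B`. -/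
def IsMoorePenrose {d : ℕ} (B Bp : Matrix (Fin d) (Fin d) ℝ) : Prop :=
  B * Bp * B = B ∧ Bp * B * Bp = Bp ∧ (B * Bp)ᵀ = B * Bp ∧ (Bp * B)ᵀ = Bp * B

section aux
variable {d : ℕ}

lemma mp_unique {A P₁ P₂ : Matrix (Fin d) (Fin d) ℝ}
    (h₁ : IsMoorePenrose A P₁) (h₂ : IsMoorePenrose A P₂) : P₁ = P₂ := by
  obtain ⟨a1, a2, a3, a4⟩ := h₁
  obtain ⟨b1, b2, b3, b4⟩ := h₂
  have hAT : Aᵀ = Aᵀ * (A * P₂) := by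
    conv_lhs => rw [← b1]
    rw [transpose_mul, b3]
  have h1 : A * P₁ = A * P₂ := by
    calc A * P₁ = P₁ᵀ * Aᵀ := by rw [← transpose_mul, a3]
    _ = P₁ᵀ * (Aᵀ * (A * P₂)) := by rw [← hAT]
    _ = (P₁ᵀ * Aᵀ) * (A * P₂) := by simp only [Matrix.mul_assoc]
    _ = (A * P₁) * (A * P₂) := by rw [← transpose_mul, a3]
    _ = (A * P₁ * A) * P₂ := by simp only [Matrix.mul_assoc]
    _ = A * P₂ := by rw [a1]
  have hAT2 : Aᵀ = (P₂ * A) * Aᵀ := by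
    conv_lhs => rw [← b1]
    rw [Matrix.mul_assoc, transpose_mul, b4]
  have h2 : P₁ * A = P₂ * A := by
    calc P₁ * A = Aᵀ * P₁ᵀ := by rw [← transpose_mul, a4]
    _ = ((P₂ * A) * Aᵀ) * P₁ᵀ := by rw [← hAT2]
    _ = (P₂ * A) * (Aᵀ * P₁ᵀ) := by simp only [Matrix.mul_assoc]
    _ = (P₂ * A) * (P₁ * A) := by rw [← transpose_mul, a4]
    _ = P₂ * (A * P₁ * A) := by simp only [Matrix.mul_assoc]
    _ = P₂ * A := by rw [a1]
  calc P₁ = P₁ * A * P₁ := a2.symm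
  _ = P₁ * (A * P₂) := by rw [Matrix.mul_assoc, h1]
  _ = (P₂ * A) * P₂ := by rw [← Matrix.mul_assoc, h2]
  _ = P₂ := b2

lemma mp_symm {A P : Matrix (Fin d) (Fin d) ℝ} (hA : Aᵀ = A)
    (hP : IsMoorePenrose A P) : Pᵀ = P := by
  obtain ⟨a1, a2, a3, a4⟩ := hP
  have e4 : A * Pᵀ = P * A := by
    calc A * Pᵀ = Aᵀ * Pᵀ := by rw [hA]
    _ = (P * A)ᵀ := (transpose_mul P A).symm
    _ = P * A := a4
  have e3 : Pᵀ * A = A * P := by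
    calc Pᵀ * A = Pᵀ * Aᵀ := by rw [hA]
    _ = (A * P)ᵀ := (transpose_mul A P).symm
    _ = A * P := a3
  have hPt : IsMoorePenrose A Pᵀ := by
    refine ⟨?_, ?_, ?_, ?_⟩
    · have h := congrArg Matrix.transpose a1
      rw [transpose_mul, transpose_mul, hA] at h
      rw [Matrix.mul_assoc]; exact h
    · have h := congrArg Matrix.transpose a2
      rw [transpose_mul, transpose_mul, hA] at h
      rw [Matrix.mul_assoc]; exact h
    · rw [e4]; exact a4
    · rw [e3]; exact a3
  exact mp_unique hPt ⟨a1, a2, a3, a4⟩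

lemma mat_ext_of_mulVec {A B : Matrix (Fin d) (Fin d) ℝ}
    (h : ∀ v, A *ᵥ v = B *ᵥ v) : A = B := by
  ext i j
  have := congrFun (h (Pi.single j 1)) i
  simpa using this

lemma sampleCov_transpose {n : ℕ} (z : Fin n → (Fin d → ℝ)) (T : Finset (Fin n)) :
    (sampleCov z T)ᵀ = sampleCov z T := by
  ext a b
  simp [sampleCov, Matrix.transpose_apply, Matrix.smul_apply, Matrix.sum_apply, mul_comm]

lemma mulVec_finset_sum {ι : Type*} (s : Finset ι) (f : ι → Matrix (Fin d) (Fin d) ℝ)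
    (v : Fin d → ℝ) : (∑ i ∈ s, f i) *ᵥ v = ∑ i ∈ s, f i *ᵥ v := by
  ext a
  simp only [Matrix.mulVec, dotProduct, Matrix.sum_apply, Finset.sum_apply, Finset.sum_mul]
  exact Finset.sum_comm

lemma dotProduct_finset_sum {ι : Type*} (s : Finset ι) (x : Fin d → ℝ)
    (f : ι → (Fin d → ℝ)) : x ⬝ᵥ (∑ i ∈ s, f i) = ∑ i ∈ s, x ⬝ᵥ f i := by
  simp only [dotProduct, Finset.sum_apply, Finset.mul_sum]
  exact Finset.sum_comm

lemma sampleCov_quad_nonneg {n : ℕ} (z : Fin n → (Fin d → ℝ)) (T : Finset (Fin n))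
    (x : Fin d → ℝ) : 0 ≤ x ⬝ᵥ (sampleCov z T) *ᵥ x := by
  have key : x ⬝ᵥ (sampleCov z T) *ᵥ x = (1 / (n : ℝ)) * ∑ i ∈ T, (z i ⬝ᵥ x) ^ 2 := by
    rw [sampleCov, smul_mulVec, dotProduct_smul, smul_eq_mul]
    congr 1
    rw [mulVec_finset_sum, dotProduct_finset_sum]
    refine Finset.sum_congr rfl fun i _ => ?_
    have hrow : (Matrix.of fun a b => z i a * z i b) *ᵥ x = fun a => z i a * (z i ⬝ᵥ x) := by
      ext a
      simp [Matrix.mulVec, dotProduct, Finset.mul_sum, mul_assoc]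
    rw [hrow]
    simp only [dotProduct, sq]
    rw [Finset.sum_mul_sum]
    simp only [Finset.mul_sum]
    rw [Finset.sum_comm]
    refine Finset.sum_congr rfl fun a _ => Finset.sum_congr rfl fun b _ => by ring
  rw [key]
  have h1 : (0 : ℝ) ≤ 1 / (n : ℝ) := by positivity
  have h2 : (0 : ℝ) ≤ ∑ i ∈ T, (z i ⬝ᵥ x) ^ 2 :=
    Finset.sum_nonneg fun i _ => sq_nonneg _
  positivity

end aux

/-- if `S_T ⪯ α·S_H` for all `T ⊆ H` with `|T| ≤ m`, `F ⊆ H`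
with `|F| ≤ m`, and `Col(S_{H∖F}) = Col(S_H)`, then for every `z`,
`zᵀ S_{H∖F}† z ≤ (1−α)⁻¹ · zᵀ S_H† z`, where `†` is the Moore–Penrose
pseudoinverse (here `P` and `Q` are the pseudoinverses of `S_{H∖F}` and `S_H`). -/
theorem pinv_quadform_after_deletion {d n m : ℕ} (z : Fin n → (Fin d → ℝ))
    (H F : Finset (Fin n)) (hFH : F ⊆ H) (hF : F.card ≤ m)
    (α : ℝ) (hα0 : 0 ≤ α) (hα1 : α < 1)
    (h : ∀ T ⊆ H, T.card ≤ m → (α • sampleCov z H - sampleCov z T).PosSemidef)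
    (hcol : Set.range (sampleCov z (H \ F)).mulVec = Set.range (sampleCov z H).mulVec)
    (P Q : Matrix (Fin d) (Fin d) ℝ)
    (hP : IsMoorePenrose (sampleCov z (H \ F)) P)
    (hQ : IsMoorePenrose (sampleCov z H) Q) :
    ∀ w : Fin d → ℝ, w ⬝ᵥ P.mulVec w ≤ (1 - α)⁻¹ * (w ⬝ᵥ Q.mulVec w) := by
  set A := sampleCov z (H \ F) with hAdef
  set B := sampleCov z H with hBdef
  have hAs : Aᵀ = A := sampleCov_transpose z _
  have hBs : Bᵀ = B := sampleCov_transpose z _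
  have hPs : Pᵀ = P := mp_symm hAs hP
  have hQs : Qᵀ = Q := mp_symm hBs hQ
  obtain ⟨pa1, pa2, pa3, pa4⟩ := hP
  obtain ⟨qa1, qa2, qa3, qa4⟩ := hQ
  -- split identity : A = B - S_F
  have hsplit : A = B - sampleCov z F := by
    rw [hAdef, hBdef, sampleCov, sampleCov, sampleCov, ← smul_sub]
    congr 1
    rw [eq_sub_iff_add_eq, Finset.sum_sdiff hFH]
  -- key quadratic form inequality
  have hkey : ∀ v, (1 - α) * (v ⬝ᵥ B *ᵥ v) ≤ v ⬝ᵥ A *ᵥ v := by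
    intro v
    have hpsd := (h F hFH hF).dotProduct_mulVec_nonneg v
    simp only [star_trivial] at hpsd
    have e1 : v ⬝ᵥ (α • B - sampleCov z F) *ᵥ v
        = α * (v ⬝ᵥ B *ᵥ v) - v ⬝ᵥ (sampleCov z F) *ᵥ v := by
      rw [Matrix.sub_mulVec, dotProduct_sub, smul_mulVec, dotProduct_smul, smul_eq_mul]
    have e2 : v ⬝ᵥ A *ᵥ v = v ⬝ᵥ B *ᵥ v - v ⬝ᵥ (sampleCov z F) *ᵥ v := by
      rw [hsplit, Matrix.sub_mulVec, dotProduct_sub]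
    rw [e1] at hpsd
    linarith
  have hB0 : ∀ v, 0 ≤ v ⬝ᵥ B *ᵥ v := fun v => sampleCov_quad_nonneg z H v
  -- projections
  have hPiB : (A * P) * B = B := by
    apply mat_ext_of_mulVec
    intro v
    have hv : B *ᵥ v ∈ Set.range (A.mulVec) := by
      rw [hcol]; exact Set.mem_range_self v
    obtain ⟨u, hu⟩ := hv
    calc ((A * P) * B) *ᵥ v = (A * P) *ᵥ (B *ᵥ v) := (mulVec_mulVec v _ _).symm
    _ = (A * P) *ᵥ (A *ᵥ u) := by rw [hu]
    _ = (A * P * A) *ᵥ u := mulVec_mulVec u _ _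
    _ = A *ᵥ u := by rw [pa1]
    _ = B *ᵥ v := hu
  have hPiA : (B * Q) * A = A := by
    apply mat_ext_of_mulVec
    intro v
    have hv : A *ᵥ v ∈ Set.range (B.mulVec) := by
      rw [← hcol]; exact Set.mem_range_self v
    obtain ⟨u, hu⟩ := hv
    calc ((B * Q) * A) *ᵥ v = (B * Q) *ᵥ (A *ᵥ v) := (mulVec_mulVec v _ _).symm
    _ = (B * Q) *ᵥ (B *ᵥ u) := by rw [hu]
    _ = (B * Q * B) *ᵥ u := mulVec_mulVec u _ _
    _ = B *ᵥ u := by rw [qa1]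
    _ = A *ᵥ v := hu
  have hPieq : A * P = B * Q := by
    have h12 : (A * P) * (B * Q) = B * Q := by rw [← Matrix.mul_assoc, hPiB]
    have h21 : (B * Q) * (A * P) = A * P := by rw [← Matrix.mul_assoc, hPiA]
    calc A * P = ((B * Q) * (A * P))ᵀ := by rw [h21, pa3]
    _ = (A * P)ᵀ * (B * Q)ᵀ := transpose_mul _ _
    _ = (A * P) * (B * Q) := by rw [pa3, qa3]
    _ = B * Q := h12
  have hPiidem : (A * P) * (A * P) = A * P := by
    calc (A * P) * (A * P) = A * (P * A * P) := by simp only [Matrix.mul_assoc]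
    _ = A * P := by rw [pa2]
  have hPPi : P * (A * P) = P := by
    calc P * (A * P) = P * A * P := by simp only [Matrix.mul_assoc]
    _ = P := pa2
  have hQPi : Q * (A * P) = Q := by
    rw [hPieq]
    calc Q * (B * Q) = Q * B * Q := by simp only [Matrix.mul_assoc]
    _ = Q := qa2
  intro w
  set u := (A * P) *ᵥ w with hudef
  have hu2 : (A * P) *ᵥ u = u := by rw [hudef, mulVec_mulVec, hPiidem]
  have hPw : P *ᵥ w = P *ᵥ u := by rw [hudef, mulVec_mulVec, hPPi]
  have hQw : Q *ᵥ w = Q *ᵥ u := by rw [hudef, mulVec_mulVec, hQPi]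
  set x := P *ᵥ u with hxdef
  set y := Q *ᵥ u with hydef
  have hAx : A *ᵥ x = u := by rw [hxdef, mulVec_mulVec, hu2]
  have hBy : B *ᵥ y = u := by
    rw [hydef, mulVec_mulVec, ← hPieq, hu2]
  -- reduce the goal quadratic forms to u
  have hwP : w ⬝ᵥ P *ᵥ w = u ⬝ᵥ x := by
    calc w ⬝ᵥ P *ᵥ w = w ⬝ᵥ P *ᵥ u := by rw [hPw]
    _ = (w ᵥ* P) ⬝ᵥ u := dotProduct_mulVec w P u
    _ = (Pᵀ *ᵥ w) ⬝ᵥ u := by rw [mulVec_transpose]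
    _ = (P *ᵥ u) ⬝ᵥ u := by rw [hPs, hPw]
    _ = u ⬝ᵥ x := dotProduct_comm _ _
  have hwQ : w ⬝ᵥ Q *ᵥ w = u ⬝ᵥ y := by
    calc w ⬝ᵥ Q *ᵥ w = w ⬝ᵥ Q *ᵥ u := by rw [hQw]
    _ = (w ᵥ* Q) ⬝ᵥ u := dotProduct_mulVec w Q u
    _ = (Qᵀ *ᵥ w) ⬝ᵥ u := by rw [mulVec_transpose]
    _ = (Q *ᵥ u) ⬝ᵥ u := by rw [hQs, hQw]
    _ = u ⬝ᵥ y := dotProduct_comm _ _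
  -- the completing-the-square argument
  have hc : (0:ℝ) < 1 - α := by linarith
  have hAxd : x ⬝ᵥ A *ᵥ x = u ⬝ᵥ x := by rw [hAx]; exact dotProduct_comm _ _
  have hkx : (1 - α) * (x ⬝ᵥ B *ᵥ x) ≤ u ⬝ᵥ x := by
    have := hkey x; rw [hAxd] at this; exact this
  have sq0 := hB0 (x - (1-α)⁻¹ • y)
  have hBv : B *ᵥ (x - (1-α)⁻¹ • y) = B *ᵥ x - (1-α)⁻¹ • u := by
    rw [Matrix.mulVec_sub, Matrix.mulVec_smul, hBy]
  have hyBx : y ⬝ᵥ B *ᵥ x = u ⬝ᵥ x := by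
    rw [dotProduct_mulVec, ← mulVec_transpose, hBs, hBy]
  have hxu : x ⬝ᵥ u = u ⬝ᵥ x := dotProduct_comm _ _
  have hyu : y ⬝ᵥ u = u ⬝ᵥ y := dotProduct_comm _ _
  have expand : (x - (1-α)⁻¹ • y) ⬝ᵥ (B *ᵥ x - (1-α)⁻¹ • u)
      = x ⬝ᵥ B *ᵥ x - (1-α)⁻¹ * (x ⬝ᵥ u) - (1-α)⁻¹ * (y ⬝ᵥ B *ᵥ x)
        + (1-α)⁻¹ * ((1-α)⁻¹ * (y ⬝ᵥ u)) := by
    simp only [sub_dotProduct, dotProduct_sub, smul_dotProduct, dotProduct_smul, smul_eq_mul]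
    ring
  rw [hBv, expand, hyBx, hxu, hyu] at sq0
  rw [hwP, hwQ]
  -- sq0 : 0 ≤ t - c⁻¹ s₁ - c⁻¹ s₁ + c⁻¹ (c⁻¹ s₂), hkx : c * t ≤ s₁; goal : s₁ ≤ c⁻¹ * s₂
  set t := x ⬝ᵥ B *ᵥ x with htdef
  set s₁ := u ⬝ᵥ x with hs1
  set s₂ := u ⬝ᵥ y with hs2
  have hmul := mul_le_mul_of_nonneg_left sq0 hc.le
  have halg : (1-α) * (t - (1-α)⁻¹ * s₁ - (1-α)⁻¹ * s₁ + (1-α)⁻¹ * ((1-α)⁻¹ * s₂))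
      = (1-α) * t - s₁ - s₁ + (1-α)⁻¹ * s₂ := by
    field_simp
  rw [mul_zero, halg] at hmul
  linarith
end

section
/- For PSD matrices A, B with equal column spaces and 0 < c ≤ 1: if A ⪰ c·B, then for all vectors z, zᵀ A† z ≤ c^{-1} · zᵀ B† z. -/
open Matrix

section Aux

variable {d : ℕ}

private lemma mp_At (A Ap : Matrix (Fin d) (Fin d) ℝ) (hs : Aᵀ = A)
    (h : IsMoorePenrose A Ap) : A * Apᵀ = Ap * A := by
  calc A * Apᵀ = Aᵀ * Apᵀ := by rw [hs]
    _ = (Ap * A)ᵀ := (transpose_mul _ _).symm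
    _ = Ap * A := h.2.2.2

private lemma mp_tA (A Ap : Matrix (Fin d) (Fin d) ℝ) (hs : Aᵀ = A)
    (h : IsMoorePenrose A Ap) : Apᵀ * A = A * Ap := by
  calc Apᵀ * A = Apᵀ * Aᵀ := by rw [hs]
    _ = (A * Ap)ᵀ := (transpose_mul _ _).symm
    _ = A * Ap := h.2.2.1

private lemma mp_AApAp (A Ap : Matrix (Fin d) (Fin d) ℝ) (hs : Aᵀ = A)
    (h : IsMoorePenrose A Ap) : A * Ap * Ap = Ap := by
  have e2 : A * Apᵀ * Ap = Ap := by rw [mp_At A Ap hs h]; exact h.2.1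
  calc A * Ap * Ap = A * Ap * (A * Apᵀ * Ap) := by rw [e2]
    _ = (A * Ap * A) * (Apᵀ * Ap) := by simp only [Matrix.mul_assoc]
    _ = A * (Apᵀ * Ap) := by rw [h.1]
    _ = Ap := by rw [← Matrix.mul_assoc]; exact e2

private lemma mp_tAA (A Ap : Matrix (Fin d) (Fin d) ℝ) (hs : Aᵀ = A)
    (h : IsMoorePenrose A Ap) : Apᵀ * A * Ap = Ap := by
  rw [mp_tA A Ap hs h]; exact mp_AApAp A Ap hs h

private lemma quad_conj (M N : Matrix (Fin d) (Fin d) ℝ) (v : Fin d → ℝ) :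
    v ⬝ᵥ (Nᵀ * M * N) *ᵥ v = (N *ᵥ v) ⬝ᵥ M *ᵥ (N *ᵥ v) := by
  rw [Matrix.mul_assoc, ← mulVec_mulVec, dotProduct_mulVec, vecMul_transpose, mulVec_mulVec]

end Aux

/-- anti-monotonicity of the pseudoinverse quadratic form.
If `A ⪰ c·B` for PSD `A, B` with equal column spaces and `0 < c ≤ 1`, then
`zᵀ A† z ≤ c⁻¹ · zᵀ B† z` for every vector `z`. -/
theorem pinv_quadform_antitone {d : ℕ} (A B Ap Bp : Matrix (Fin d) (Fin d) ℝ)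
    (hA : A.PosSemidef) (hB : B.PosSemidef)
    (hcol : Set.range A.mulVec = Set.range B.mulVec)
    (hAp : IsMoorePenrose A Ap) (hBp : IsMoorePenrose B Bp)
    (c : ℝ) (hc0 : 0 < c) (hc1 : c ≤ 1)
    (hAB : (A - c • B).PosSemidef) :
    ∀ z : Fin d → ℝ, z ⬝ᵥ Ap.mulVec z ≤ c⁻¹ * (z ⬝ᵥ Bp.mulVec z) := by
  intro z
  have hAs : Aᵀ = A := by
    rw [← conjTranspose_eq_transpose_of_trivial]; exact hA.1
  have hBs : Bᵀ = B := by
    rw [← conjTranspose_eq_transpose_of_trivial]; exact hB.1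
  set x : Fin d → ℝ := Ap *ᵥ z with hxdef
  set w : Fin d → ℝ := A *ᵥ x with hwdef
  -- x ⬝ᵥ w = z ⬝ᵥ Ap z
  have hxw : x ⬝ᵥ w = z ⬝ᵥ Ap *ᵥ z := by
    rw [hwdef, hxdef, ← quad_conj A Ap z, mp_tAA A Ap hAs hAp]
  -- the projections agree : A * Ap = B * Bp
  have hQP : (B * Bp) * (A * Ap) = A * Ap := by
    ext i j
    have hmem : (A * Ap) *ᵥ (Pi.single j 1) ∈ Set.range B.mulVec := by
      rw [← hcol]
      exact ⟨Ap *ᵥ (Pi.single j 1), by rw [mulVec_mulVec]⟩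
    obtain ⟨y, hy⟩ := hmem
    have h1 : (B * Bp) *ᵥ ((A * Ap) *ᵥ (Pi.single j 1)) = (A * Ap) *ᵥ (Pi.single j 1) := by
      rw [← hy, mulVec_mulVec, hBp.1]
    rw [mulVec_mulVec] at h1
    simpa using congrFun h1 i
  have hPQ : (A * Ap) * (B * Bp) = B * Bp := by
    ext i j
    have hmem : (B * Bp) *ᵥ (Pi.single j 1) ∈ Set.range A.mulVec := by
      rw [hcol]
      exact ⟨Bp *ᵥ (Pi.single j 1), by rw [mulVec_mulVec]⟩
    obtain ⟨y, hy⟩ := hmem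
    have h1 : (A * Ap) *ᵥ ((B * Bp) *ᵥ (Pi.single j 1)) = (B * Bp) *ᵥ (Pi.single j 1) := by
      rw [← hy, mulVec_mulVec, hAp.1]
    rw [mulVec_mulVec] at h1
    simpa using congrFun h1 i
  have hproj : A * Ap = B * Bp := by
    calc A * Ap = (B * Bp) * (A * Ap) := hQP.symm
      _ = ((B * Bp) * (A * Ap))ᵀᵀ := by rw [transpose_transpose]
      _ = ((A * Ap)ᵀ * (B * Bp)ᵀ)ᵀ := by rw [transpose_mul]
      _ = ((A * Ap) * (B * Bp))ᵀ := by rw [hAp.2.2.1, hBp.2.2.1]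
      _ = (B * Bp)ᵀ := by rw [hPQ]
      _ = B * Bp := hBp.2.2.1
  -- facts about w
  have hwz : w = (B * Bp) *ᵥ z := by rw [hwdef, hxdef, mulVec_mulVec, hproj]
  have hBpw : Bp *ᵥ w = Bp *ᵥ z := by
    rw [hwz, mulVec_mulVec, ← Matrix.mul_assoc, hBp.2.1]
  have hwB : B *ᵥ (Bp *ᵥ w) = w := by
    rw [hBpw, mulVec_mulVec, ← hwz]
  have hm : (B * Bp)ᵀ * Bp * (B * Bp) = Bp := by
    rw [hBp.2.2.1,
      show B * Bp * Bp * (B * Bp) = B * Bp * Bp * B * Bp by simp only [Matrix.mul_assoc],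
      mp_AApAp B Bp hBs hBp, hBp.2.1]
  have hwBpw : w ⬝ᵥ Bp *ᵥ w = z ⬝ᵥ Bp *ᵥ z := by
    rw [hwz, ← quad_conj Bp (B * Bp) z, hm]
  -- Loewner inequality applied to x
  have hq : c * (x ⬝ᵥ B *ᵥ x) ≤ x ⬝ᵥ A *ᵥ x := by
    have h0 := hAB.dotProduct_mulVec_nonneg x
    simp only [star_trivial, sub_mulVec, smul_mulVec, dotProduct_sub,
      dotProduct_smul, smul_eq_mul] at h0
    linarith
  -- the B-side variational inequality with u = c⁻¹ • w
  set u : Fin d → ℝ := c⁻¹ • w with hudef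
  have hBu : B *ᵥ (Bp *ᵥ u) = u := by
    rw [hudef, mulVec_smul, mulVec_smul, hwB]
  have key : 2 * (x ⬝ᵥ u) - x ⬝ᵥ B *ᵥ x ≤ u ⬝ᵥ Bp *ᵥ u := by
    have h0 := hB.dotProduct_mulVec_nonneg (x - Bp *ᵥ u)
    have e1 : (x - Bp *ᵥ u) ⬝ᵥ B *ᵥ (x - Bp *ᵥ u)
        = x ⬝ᵥ B *ᵥ x - x ⬝ᵥ u - u ⬝ᵥ x + u ⬝ᵥ Bp *ᵥ u := by
      rw [mulVec_sub, dotProduct_sub, sub_dotProduct, sub_dotProduct, hBu]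
      have e2 : (Bp *ᵥ u) ⬝ᵥ B *ᵥ x = u ⬝ᵥ x := by
        rw [dotProduct_mulVec, ← mulVec_transpose, hBs, hBu]
      have e3 : (Bp *ᵥ u) ⬝ᵥ u = u ⬝ᵥ Bp *ᵥ u := dotProduct_comm _ _
      rw [e2, e3]
      ring
    rw [star_trivial, e1] at h0
    have e4 : u ⬝ᵥ x = x ⬝ᵥ u := dotProduct_comm _ _
    linarith
  -- put everything together
  have hxu : x ⬝ᵥ u = c⁻¹ * (x ⬝ᵥ w) := by
    rw [hudef, dotProduct_smul, smul_eq_mul]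
  have huu : u ⬝ᵥ Bp *ᵥ u = c⁻¹ * (c⁻¹ * (w ⬝ᵥ Bp *ᵥ w)) := by
    rw [hudef, mulVec_smul, dotProduct_smul, smul_dotProduct, smul_eq_mul, smul_eq_mul]
  have hxAx : x ⬝ᵥ A *ᵥ x = z ⬝ᵥ Ap *ᵥ z := by rw [← hwdef]; exact hxw
  have hcinv : 0 < c⁻¹ := inv_pos.mpr hc0
  rw [hxu, hxw, huu, hwBpw] at key
  rw [hxAx] at hq
  -- from hq : c * (x ⬝ᵥ B x) ≤ S, so x ⬝ᵥ B x ≤ c⁻¹ * S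
  have hq2 : x ⬝ᵥ B *ᵥ x ≤ c⁻¹ * (z ⬝ᵥ Ap *ᵥ z) := (le_inv_mul_iff₀ hc0).mpr hq
  have final : c⁻¹ * (z ⬝ᵥ Ap *ᵥ z) ≤ c⁻¹ * (c⁻¹ * (z ⬝ᵥ Bp *ᵥ z)) := by linarith
  exact (mul_le_mul_iff_right₀ hcinv).mp final
end
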